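/- Let f : [0,1] → [0,1] be a homeomorphism whose set of non-wandering points is finite. Then h_pol(f) = 1. -/

import Mathlib

open Filter Topology TopologicalSpace Set
open scoped ENNReal

/-- The dynamic distance `d_n^f(x,y) = max_{0 ≤ k ≤ n-1} d(f^k x, f^k y)`. -/
noncomputable def dynDist {X : Type*} [MetricSpace X] (f : X → X) (n : ℕ) (x y : X) : ℝ :=
  ((Finset.range n).sup fun k => nndist (f^[k] x) (f^[k] y) : NNReal)

/-- A finite set `E` is `(n,ε)`-separated for `f`. -/
def IsDynSeparated {X : Type*} [MetricSpace X] (f : X → X) (n : ℕ) (ε : ℝ) (E : Finset X) :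
    Prop :=
  ∀ x ∈ E, ∀ y ∈ E, x ≠ y → ε ≤ dynDist f n x y

/-- `S(n,ε;Y)`: the maximal cardinality of an `(n,ε)`-separated subset of `Y`. -/
noncomputable def maxSep {X : Type*} [MetricSpace X] (f : X → X) (Y : Set X) (n : ℕ) (ε : ℝ) :
    ℕ :=
  sSup {m : ℕ | ∃ E : Finset X, ↑E ⊆ Y ∧ E.card = m ∧ IsDynSeparated f n ε E}

/-- The polynomial entropy `h_pol(f;Y)`.  Since `ε ↦ S(n,ε;Y)` is nonincreasing, the limit as
`ε → 0` of the `limsup` coincides with the supremum over `ε > 0`. -/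
noncomputable def polEnt {X : Type*} [MetricSpace X] (f : X → X) (Y : Set X) : ℝ≥0∞ :=
  ⨆ (ε : ℝ) (_ : 0 < ε),
    Filter.atTop.limsup fun n : ℕ =>
      ENNReal.ofReal (Real.log (maxSep f Y n ε) / Real.log n)

/-- The set of non-wandering points of `f`. -/
def nonWandering {X : Type*} [TopologicalSpace X] (f : X → X) : Set X :=
  {p | ∀ U ∈ nhds p, ∃ n : ℕ, 1 ≤ n ∧ (f^[n] '' U ∩ U).Nonempty}

/-- The induced map `2^f` on the hyperspace of nonempty closed (= compact) subsets of a
compact metric space. -/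
noncomputable def induced2 {X : Type*} [TopologicalSpace X] (f : X → X) (hf : Continuous f) :
    NonemptyCompacts X → NonemptyCompacts X :=
  fun A => ⟨⟨f '' A, A.isCompact.image hf⟩, A.nonempty.image f⟩

/-- The hyperspace `C(X)` of subcontinua (nonempty closed connected subsets) of `X`. -/
abbrev Subcontinua (X : Type*) [TopologicalSpace X] :=
  {A : NonemptyCompacts X // IsConnected (A : Set X)}

/-- The induced map `C(f)` on the hyperspace of subcontinua. -/
noncomputable def inducedC {X : Type*} [TopologicalSpace X] (f : X → X) (hf : Continuous f) :
    Subcontinua X → Subcontinua X :=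
  fun A => ⟨induced2 f hf A.1, A.2.image f hf.continuousOn⟩

/-- The `k`-fold symmetric product `X^{*k}`: nonempty subsets of `X` with at most `k` points. -/
abbrev SymProd (X : Type*) [TopologicalSpace X] (k : ℕ) :=
  {A : NonemptyCompacts X // (A : Set X).Finite ∧ (A : Set X).ncard ≤ k}

/-- The induced map `f^{*k}` on the `k`-fold symmetric product. -/
noncomputable def inducedSym {X : Type*} [TopologicalSpace X] (f : X → X) (hf : Continuous f)
    (k : ℕ) : SymProd X k → SymProd X k :=
  fun A => ⟨induced2 f hf A.1, A.2.1.image f, le_trans (Set.ncard_image_le A.2.1) A.2.2⟩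

/-- Sets `U 0, …, U (L-1)` are mutually singular for `f`. -/
def MutuallySingularSets {X : Type*} [TopologicalSpace X] (f : X → X) {L : ℕ}
    (U : Fin L → Set X) : Prop :=
  ∀ M : ℕ, ∃ x : X, ∃ n : Fin L → ℕ, (∀ j, 1 ≤ n j ∧ f^[n j] x ∈ U j) ∧
    ∀ i j, i ≠ j → (M : ℤ) < |(n i : ℤ) - (n j : ℤ)|

/-- A finite set `S ⊆ X \ NW(f)` is singular: it consists of mutually singular points, i.e.
every family of respective neighbourhoods of its points is mutually singular. -/
def IsSingularSet {X : Type*} [TopologicalSpace X] (f : X → X) (S : Set X) : Prop :=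
  S.Finite ∧ (∀ x ∈ S, x ∉ nonWandering f) ∧
  ∀ (L : ℕ) (x : Fin L → X), Function.Injective x → Set.range x = S →
    ∀ U : Fin L → Set X, (∀ j, U j ∈ nhds (x j)) → MutuallySingularSets f U

/-- The set of codings of length-`n` orbit segments of points of `Y` relative to the family
`F`, where the letter `none` stands for `Y_∞ = Y \ ⋃ F`. -/
def codings {X : Type*} (f : X → X) {L : ℕ} (F : Fin L → Set X) (Y : Set X) (n : ℕ) :
    Set (Fin n → Option (Fin L)) :=
  {w | ∃ x ∈ Y, ∀ j : Fin n, match w j with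
    | some i => f^[(j : ℕ)] x ∈ F i
    | none => f^[(j : ℕ)] x ∈ Y \ ⋃ i, F i}

/-- The polynomial entropy of `f` on `Y` relative to the family `F`:
`limsup_n log #A_n(F;Y) / log n`. -/
noncomputable def polEntRel {X : Type*} (f : X → X) {L : ℕ} (F : Fin L → Set X) (Y : Set X) :
    ℝ≥0∞ :=
  Filter.atTop.limsup fun n : ℕ =>
    ENNReal.ofReal (Real.log ((codings f F Y n).ncard) / Real.log n)

/-- The circle is connected. -/
theorem circle_isConnected_univ : IsConnected (Set.univ : Set Circle) := by
  have hsurj : Function.Surjective Circle.exp := fun z => ⟨Complex.arg z, Circle.exp_arg z⟩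
  have : ConnectedSpace Circle :=
    { toPreconnectedSpace := ⟨by
        rw [← Set.image_univ_of_surjective hsurj]
        exact isPreconnected_univ.image _ Circle.exp.continuous.continuousOn⟩,
      toNonempty := ⟨1⟩ }
  exact isConnected_univ

/-!
A homeomorphism of `[0,1]` and all its iterates are monotone or antitone. Hence, for the points
`x₀ < ⋯ < x_m` of an `(n,ε)`-separated set and each `k < n`, the gaps between consecutive points
of `f^k x₀, …, f^k x_m` add up to at most `1`. Bounding `d_n^f(x_i, x_{i+1})` by the sum of its
`n` gaps gives `m ε ≤ n`, so `S(n,ε) ≤ n/ε + 1`.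

Conversely, if `f² = id` every point is non-wandering, so when `NW(f)` is finite the increasing
homeomorphism `g = f²` moves some point `x`. The `g`-orbit of `x` is monotone, hence
`d(gᵖx, x) ≥ ε := d(gx, x)` for all `p ≥ 1`, and the backward orbit `x, g⁻¹x, …, g⁻ᵐx` is
`(2m+1, ε)`-separated: `g⁻ⁱx` and `g⁻ʲx` (`i < j`) are `ε` apart at time `2j`. So
`n/2 ≤ S(n,ε) ≤ (1/ε + 1) n`, and both bounds have polynomial growth rate `1`.
-/

section DynDist

variable {X : Type*} [MetricSpace X] {f : X → X} {n : ℕ}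

lemma dist_iterate_le_dynDist {k : ℕ} (hk : k < n) (x y : X) :
    dist (f^[k] x) (f^[k] y) ≤ dynDist f n x y := by
  rw [dynDist, ← coe_nndist, NNReal.coe_le_coe]
  exact Finset.le_sup (f := fun k => nndist (f^[k] x) (f^[k] y)) (Finset.mem_range.2 hk)

lemma dynDist_le_sum_dist (x y : X) :
    dynDist f n x y ≤ ∑ k ∈ Finset.range n, dist (f^[k] x) (f^[k] y) := by
  simp only [dynDist, ← coe_nndist, ← NNReal.coe_sum, NNReal.coe_le_coe]
  exact Finset.sup_le fun k hk =>
    Finset.single_le_sum (f := fun k => nndist (f^[k] x) (f^[k] y)) (fun _ _ => zero_le) hk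

lemma dynDist_comm (x y : X) : dynDist f n x y = dynDist f n y x := by
  simp only [dynDist, nndist_comm]

variable {Y : Set X} {ε B : ℝ}

lemma bddAbove_card_isDynSeparated
    (hB : ∀ E : Finset X, ↑E ⊆ Y → IsDynSeparated f n ε E → (E.card : ℝ) ≤ B) :
    BddAbove {m : ℕ | ∃ E : Finset X, ↑E ⊆ Y ∧ E.card = m ∧ IsDynSeparated f n ε E} :=
  ⟨⌊B⌋₊, by rintro _ ⟨E, hEY, rfl, hE⟩; exact Nat.le_floor (hB E hEY hE)⟩

lemma maxSep_le_of_card_le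
    (hB : ∀ E : Finset X, ↑E ⊆ Y → IsDynSeparated f n ε E → (E.card : ℝ) ≤ B) :
    (maxSep f Y n ε : ℝ) ≤ B := by
  have hempty : IsDynSeparated f n ε ∅ := by simp [IsDynSeparated]
  have hbdd := bddAbove_card_isDynSeparated hB
  obtain ⟨E, hEY, hcard, hE⟩ := Nat.sSup_mem (by exact ⟨0, ∅, by simp, rfl, hempty⟩) hbdd
  rw [maxSep, ← hcard]
  exact hB E hEY hE

lemma card_le_maxSep
    (hB : ∀ E : Finset X, ↑E ⊆ Y → IsDynSeparated f n ε E → (E.card : ℝ) ≤ B)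
    {E : Finset X} (hEY : ↑E ⊆ Y) (hE : IsDynSeparated f n ε E) :
    E.card ≤ maxSep f Y n ε :=
  le_csSup (bddAbove_card_isDynSeparated hB) ⟨E, hEY, rfl, hE⟩

end DynDist

lemma monotone_or_antitone_iterate {α : Type*} [Preorder α] {f : α → α}
    (hf : Monotone f ∨ Antitone f) (k : ℕ) : Monotone f^[k] ∨ Antitone f^[k] := by
  induction k with
  | zero => exact Or.inl monotone_id
  | succ k ih =>
    rw [Function.iterate_succ']
    rcases hf with hf | hf <;> rcases ih with ih | ih
    exacts [Or.inl (hf.comp ih), Or.inr (hf.comp_antitone ih), Or.inr (hf.comp_monotone ih),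
      Or.inl (hf.comp ih)]

lemma sum_range_dist_succ_of_monotone {w : ℕ → ℝ} (hw : Monotone w) (m : ℕ) :
    ∑ i ∈ Finset.range m, dist (w i) (w (i + 1)) = dist (w 0) (w m) := by
  have hdist : ∀ {i j}, i ≤ j → dist (w i) (w j) = w j - w i := fun hij => by
    rw [dist_comm, Real.dist_eq, abs_of_nonneg (sub_nonneg.2 (hw hij))]
  rw [Finset.sum_congr rfl fun i _ => hdist i.le_succ, Finset.sum_range_sub, hdist m.zero_le]

lemma sum_range_dist_succ_of_antitone {w : ℕ → ℝ} (hw : Antitone w) (m : ℕ) :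
    ∑ i ∈ Finset.range m, dist (w i) (w (i + 1)) = dist (w 0) (w m) := by
  simpa only [dist_neg_neg] using sum_range_dist_succ_of_monotone hw.neg m

lemma unitInterval.sum_range_dist_succ_le_one {v : ℕ → unitInterval}
    (hv : Monotone v ∨ Antitone v) (m : ℕ) :
    ∑ i ∈ Finset.range m, dist (v i) (v (i + 1)) ≤ 1 := by
  have hsum : ∑ i ∈ Finset.range m, dist (v i : ℝ) (v (i + 1)) = dist (v 0 : ℝ) (v m) := by
    rcases hv with hv | hv
    · exact sum_range_dist_succ_of_monotone ((Subtype.mono_coe _).comp hv) m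
    · exact sum_range_dist_succ_of_antitone ((Subtype.mono_coe _).comp_antitone hv) m
  simp only [Subtype.dist_eq, hsum]
  exact Real.dist_le_of_mem_Icc_01 (v 0).2 (v m).2

section UnitInterval

variable {f : unitInterval → unitInterval} {n : ℕ} {ε : ℝ}

lemma mul_le_of_le_dynDist_succ (hf : Monotone f ∨ Antitone f) {x : ℕ → unitInterval}
    (hx : Monotone x) {m : ℕ} (hsep : ∀ i < m, ε ≤ dynDist f n (x i) (x (i + 1))) :
    m * ε ≤ n :=
  calc (m : ℝ) * ε = ∑ _i ∈ Finset.range m, ε := by simp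
    _ ≤ ∑ i ∈ Finset.range m, dynDist f n (x i) (x (i + 1)) :=
      Finset.sum_le_sum fun i hi => hsep i (Finset.mem_range.1 hi)
    _ ≤ ∑ i ∈ Finset.range m, ∑ k ∈ Finset.range n, dist (f^[k] (x i)) (f^[k] (x (i + 1))) :=
      Finset.sum_le_sum fun i _ => dynDist_le_sum_dist _ _
    _ = ∑ k ∈ Finset.range n, ∑ i ∈ Finset.range m, dist (f^[k] (x i)) (f^[k] (x (i + 1))) :=
      Finset.sum_comm
    _ ≤ ∑ _k ∈ Finset.range n, (1 : ℝ) := Finset.sum_le_sum fun k _ =>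
      unitInterval.sum_range_dist_succ_le_one
        ((monotone_or_antitone_iterate hf k).imp (·.comp hx) (·.comp_monotone hx)) m
    _ = n := by simp

lemma card_le_of_isDynSeparated (hf : Monotone f ∨ Antitone f) (hε : 0 < ε)
    {E : Finset unitInterval} (hE : IsDynSeparated f n ε E) : (E.card : ℝ) ≤ n / ε + 1 := by
  obtain rfl | hne := E.eq_empty_or_nonempty
  · simp only [Finset.card_empty, Nat.cast_zero]
    positivity
  obtain ⟨m, hm⟩ : ∃ m, E.card = m + 1 := ⟨E.card - 1, by have := hne.card_pos; omega⟩
  set χ := E.orderEmbOfFin hm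
  let x : ℕ → unitInterval := fun i => χ ⟨min i m, by omega⟩
  have hx : Monotone x := fun i j hij => χ.monotone (Fin.mk_le_mk.2 (by omega))
  have hsep : ∀ i < m, ε ≤ dynDist f n (x i) (x (i + 1)) := fun i hi =>
    hE _ (E.orderEmbOfFin_mem hm _) _ (E.orderEmbOfFin_mem hm _)
      (χ.strictMono (Fin.mk_lt_mk.2 (by omega))).ne
  have hmn := mul_le_of_le_dynDist_succ hf hx hsep
  rw [← le_div_iff₀ hε] at hmn
  rw [hm, Nat.cast_succ]
  linarith

lemma maxSep_le (hf : Monotone f ∨ Antitone f) (hε : 0 < ε) (Y : Set unitInterval) (n : ℕ) :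
    (maxSep f Y n ε : ℝ) ≤ n / ε + 1 :=
  maxSep_le_of_card_le fun _ _ hE => card_le_of_isDynSeparated hf hε hE

end UnitInterval

lemma mem_nonWandering_of_isPeriodicPt {X : Type*} [TopologicalSpace X] {f : X → X} {p : ℕ}
    {x : X} (hp : 0 < p) (hx : Function.IsPeriodicPt f p x) : x ∈ nonWandering f :=
  fun _ hU => ⟨p, hp, x, ⟨x, mem_of_mem_nhds hU, hx⟩, mem_of_mem_nhds hU⟩

lemma dist_map_le_dist_iterate {s : Set ℝ} {g : s → s} (hg : Monotone g) (x : s) {k : ℕ}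
    (hk : 1 ≤ k) : dist (g x) x ≤ dist (g^[k] x) x := by
  have hmem : (g x : ℝ) ∈ uIcc (x : ℝ) (g^[k] x) := by
    rcases le_total x (g x) with h | h
    · exact mem_uIcc_of_le h (hg.monotone_iterate_of_le_map h hk)
    · exact mem_uIcc_of_ge (hg.antitone_iterate_of_map_le h hk) h
  simpa only [Subtype.dist_eq, dist_comm _ (x : ℝ)] using Real.dist_left_le_of_mem_uIcc hmem

lemma exists_isDynSeparated_symm_iterate {X : Type*} [MetricSpace X] (e : X ≃ X) {p : ℕ} {x : X}
    {ε : ℝ} (hε : 0 < ε) (hx : ∀ q, 1 ≤ q → ε ≤ dist (e^[p * q] x) x) {m n : ℕ}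
    (hmn : p * m < n) : ∃ E : Finset X, E.card = m + 1 ∧ IsDynSeparated e n ε E := by
  let y : ℕ → X := fun i => e.symm^[p * i] x
  have hy : ∀ i, e^[p * i] (y i) = x := fun i => e.right_inv.iterate (p * i) x
  have hsep : ∀ i j, i < j → ε ≤ dist (e^[p * j] (y i)) (e^[p * j] (y j)) := by
    intro i j hij
    have hji : p * j = p * (j - i) + p * i := by rw [← mul_add, Nat.sub_add_cancel hij.le]
    rw [hji, Function.iterate_add_apply, hy i, ← hji, hy j]
    exact hx _ (by omega)
  have hinj : Function.Injective y := .of_lt_imp_ne fun i j hij hyij =>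
    (hsep i j hij).not_gt (by rw [hyij, dist_self]; exact hε)
  refine ⟨(Finset.range (m + 1)).map ⟨y, hinj⟩, by simp, ?_⟩
  simp only [IsDynSeparated, Finset.mem_map, Finset.mem_range, Function.Embedding.coeFn_mk]
  rintro _ ⟨i, hi, rfl⟩ _ ⟨j, hj, rfl⟩ hne
  have hsep' : ∀ i j, i < j → j < m + 1 → ε ≤ dynDist e n (y i) (y j) := fun i j hij hj =>
    (hsep i j hij).trans (dist_iterate_le_dynDist (by nlinarith) _ _)
  rcases lt_or_gt_of_ne (ne_of_apply_ne y hne) with hij | hji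
  · exact hsep' i j hij hj
  · rw [dynDist_comm]
    exact hsep' j i hji hi

lemma exists_forall_half_le_maxSep (f : unitInterval ≃ₜ unitInterval)
    (hf : Monotone f ∨ Antitone f) (hNW : (nonWandering f).Finite) :
    ∃ ε > 0, ∀ n : ℕ, (n : ℝ) / 2 ≤ maxSep f univ n ε := by
  obtain ⟨x, hx⟩ : ∃ x, f^[2] x ≠ x := by
    by_contra! h
    refine Set.infinite_univ_iff.2 (Set.infinite_coe_iff.2 (Set.Icc_infinite zero_lt_one))
      (hNW.subset fun x _ => mem_nonWandering_of_isPeriodicPt two_pos (h x))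
  have hg : Monotone f^[2] := by
    rcases hf with hf | hf
    exacts [hf.iterate 2, hf.comp hf]
  refine ⟨dist (f^[2] x) x, dist_pos.2 hx, fun n => ?_⟩
  obtain rfl | hn := n.eq_zero_or_pos
  · simp
  have horbit : ∀ q, 1 ≤ q → dist (f^[2] x) x ≤ dist (f.toEquiv^[2 * q] x) x := fun q hq => by
    simpa only [Homeomorph.coe_toEquiv, Function.iterate_mul] using
      dist_map_le_dist_iterate hg x hq
  obtain ⟨E, hcard, hE⟩ := exists_isDynSeparated_symm_iterate f.toEquiv (dist_pos.2 hx) horbit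
    (m := (n - 1) / 2) (n := n) (by omega)
  have hle : E.card ≤ maxSep f univ n (dist (f^[2] x) x) :=
    card_le_maxSep (fun _ _ hE => card_le_of_isDynSeparated hf (dist_pos.2 hx) hE)
      (subset_univ _) hE
  rw [div_le_iff₀ two_pos]
  exact_mod_cast (by omega : n ≤ maxSep f univ n (dist (f^[2] x) x) * 2)

lemma tendsto_log_mul_rpow_div_log {C a : ℝ} (hC : 0 < C) :
    Tendsto (fun n : ℕ => Real.log (C * n ^ a) / Real.log n) atTop (𝓝 a) := by
  have hlog : Tendsto (fun n : ℕ => Real.log n) atTop atTop :=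
    Real.tendsto_log_atTop.comp tendsto_natCast_atTop_atTop
  have hlim := (tendsto_const_nhds (x := Real.log C)).div_atTop hlog |>.add_const a
  rw [zero_add] at hlim
  refine hlim.congr' ?_
  filter_upwards [eventually_gt_atTop 1] with n hn
  have hlogn : 0 < Real.log n := Real.log_pos (by exact_mod_cast hn)
  rw [Real.log_mul hC.ne' (by positivity), Real.log_rpow (by positivity)]
  field_simp

lemma limsup_ofReal_log_div_log_le {u : ℕ → ℕ} {C a : ℝ} (hC : 0 < C)
    (hu : ∀ᶠ n in atTop, (u n : ℝ) ≤ C * n ^ a) :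
    atTop.limsup (fun n => ENNReal.ofReal (Real.log (u n) / Real.log n)) ≤ ENNReal.ofReal a := by
  rw [← ((ENNReal.continuous_ofReal.tendsto a).comp (tendsto_log_mul_rpow_div_log hC)).limsup_eq]
  refine limsup_le_limsup ?_
  filter_upwards [hu, eventually_gt_atTop 1] with n hun hn
  obtain h0 | hpos := (u n).eq_zero_or_pos
  · simp [h0]
  · exact ENNReal.ofReal_le_ofReal (div_le_div_of_nonneg_right
      (Real.log_le_log (by exact_mod_cast hpos) hun) (Real.log_nonneg (by exact_mod_cast hn.le)))

lemma ofReal_le_limsup_log_div_log {u : ℕ → ℕ} {c a : ℝ} (hc : 0 < c)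
    (hu : ∀ᶠ n in atTop, c * n ^ a ≤ u n) :
    ENNReal.ofReal a ≤ atTop.limsup (fun n => ENNReal.ofReal (Real.log (u n) / Real.log n)) := by
  rw [← ((ENNReal.continuous_ofReal.tendsto a).comp (tendsto_log_mul_rpow_div_log hc)).limsup_eq]
  refine limsup_le_limsup ?_
  filter_upwards [hu, eventually_gt_atTop 1] with n hun hn
  exact ENNReal.ofReal_le_ofReal (div_le_div_of_nonneg_right
    (Real.log_le_log (by positivity) hun) (Real.log_nonneg (by exact_mod_cast hn.le)))

theorem stmt15 (f : ↥unitInterval ≃ₜ ↥unitInterval) (hNW : (nonWandering ⇑f).Finite) :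
    polEnt ⇑f Set.univ = 1 := by
  have hf : Monotone f ∨ Antitone f :=
    (Continuous.strictMono_of_inj_boundedOrder' f.continuous f.injective).imp
      StrictMono.monotone StrictAnti.antitone
  apply le_antisymm
  · refine iSup₂_le fun ε hε => ?_
    have hu : ∀ᶠ n : ℕ in atTop, (maxSep f univ n ε : ℝ) ≤ (1 / ε + 1) * n ^ (1 : ℝ) := by
      filter_upwards [eventually_ge_atTop 1] with n hn
      have hn' : (1 : ℝ) ≤ n := by exact_mod_cast hn
      rw [Real.rpow_one, add_mul, one_div_mul_eq_div, one_mul]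
      linarith [maxSep_le hf hε univ n]
    simpa using limsup_ofReal_log_div_log_le (by positivity) hu
  · obtain ⟨ε, hε, hlower⟩ := exists_forall_half_le_maxSep f hf hNW
    have hu : ∀ᶠ n : ℕ in atTop, 1 / 2 * (n : ℝ) ^ (1 : ℝ) ≤ maxSep f univ n ε :=
      Eventually.of_forall fun n => by simpa [Real.rpow_one, div_eq_inv_mul] using hlower n
    exact le_iSup₂_of_le ε hε (by simpa using ofReal_le_limsup_log_div_log one_half_pos hu)
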